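/- arXiv:2210.00342 — 7 statements merged into one kernel-verified Lean document; each statement's English description precedes it below -/
import Mathlib

section
/- For all coprime positive integers a and b, the number of distinct subsequences of the binary word gen(a,b) (including the empty subsequence) equals a + b − 1. -/
/-- `P s` is the number of distinct subsequences of the binary word `s`
(the letter `A` is `true`, the letter `B` is `false`), including the empty one. -/
def P (s : List Bool) : ℕ := s.sublists.toFinset.card

/-- `PA s` is the number of distinct subsequences of `s` starting with `A` (= `true`),
plus one for the empty subsequence. -/
def PA (s : List Bool) : ℕ :=
  ((s.sublists.toFinset).filter (fun t => t.head? = some true)).card + 1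

/-- `PB s` is the number of distinct subsequences of `s` starting with `B` (= `false`),
plus one for the empty subsequence. -/
def PB (s : List Bool) : ℕ :=
  ((s.sublists.toFinset).filter (fun t => t.head? = some false)).card + 1

/-- `QA s` is the number of distinct subsequences of `s` ending with `A` (= `true`),
plus one for the empty subsequence. -/
def QA (s : List Bool) : ℕ :=
  ((s.sublists.toFinset).filter (fun t => t.getLast? = some true)).card + 1

/-- `QB s` is the number of distinct subsequences of `s` ending with `B` (= `false`),
plus one for the empty subsequence. -/
def QB (s : List Bool) : ℕ :=
  ((s.sublists.toFinset).filter (fun t => t.getLast? = some false)).card + 1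

/-- The word `gen a b`, defined by the Euclidean recursion:
`gen 1 1 = []`, `gen a b = A ∘ gen (a-b) b` if `a > b`, `gen a b = B ∘ gen a (b-a)` if `b > a`. -/
def gen : ℕ → ℕ → List Bool
  | 0, _ => []
  | _ + 1, 0 => []
  | a + 1, b + 1 =>
    if a > b then true :: gen (a - b) (b + 1)
    else if b > a then false :: gen (a + 1) (b - a)
    else []
termination_by a b => a + b
decreasing_by all_goals omega

/-- `star s` swaps all letters `A` and `B` in `s`. -/
def star (s : List Bool) : List Bool := s.map (fun x => !x)

/-- `z n` is the alternating word `ABAB…` of length `n`. -/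
def z : ℕ → List Bool
  | 0 => []
  | n + 1 => true :: star (z n)

lemma filter_head_same (b : Bool) (s : List Bool) :
    ((b::s).sublists.toFinset.filter (fun t => t.head? = some b)) =
      s.sublists.toFinset.image (b :: ·) := by
  ext t
  simp only [Finset.mem_filter, Finset.mem_image, List.mem_toFinset, List.mem_sublists]
  constructor
  · rintro ⟨h1, h2⟩
    cases t with
    | nil => simp at h2
    | cons x u =>
      simp only [List.head?_cons, Option.some.injEq] at h2
      subst h2
      exact ⟨u, List.cons_sublist_cons.1 h1, rfl⟩
  · rintro ⟨u, hu, rfl⟩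
    exact ⟨List.cons_sublist_cons.2 hu, rfl⟩

lemma filter_head_other (b c : Bool) (s : List Bool) (hbc : b ≠ c) :
    ((b::s).sublists.toFinset.filter (fun t => t.head? = some c)) =
      s.sublists.toFinset.filter (fun t => t.head? = some c) := by
  ext t
  simp only [Finset.mem_filter, List.mem_toFinset, List.mem_sublists]
  constructor
  · rintro ⟨h1, h2⟩
    refine ⟨?_, h2⟩
    rcases List.sublist_cons_iff.1 h1 with h | ⟨r, rfl, hr⟩
    · exact h
    · simp only [List.head?_cons, Option.some.injEq] at h2
      exact absurd h2 hbc
  · rintro ⟨h1, h2⟩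
    exact ⟨h1.trans (List.sublist_cons_self b s), h2⟩

lemma P_split (s : List Bool) : P s + 1 = PA s + PB s := by
  classical
  unfold P PA PB
  set S := s.sublists.toFinset with hS
  have hunion : S = (S.filter (fun t => t.head? = some true)) ∪
      ((S.filter (fun t => t.head? = some false)) ∪ {([] : List Bool)}) := by
    ext t
    simp only [Finset.mem_union, Finset.mem_filter, Finset.mem_singleton]
    constructor
    · intro ht
      match t with
      | [] => exact Or.inr (Or.inr rfl)
      | true :: u => exact Or.inl ⟨ht, rfl⟩
      | false :: u => exact Or.inr (Or.inl ⟨ht, rfl⟩)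
    · rintro (⟨h, _⟩ | ⟨h, _⟩ | rfl)
      · exact h
      · exact h
      · simp [hS, List.nil_sublist]
  have hd1 : Disjoint (S.filter (fun t => t.head? = some false)) ({([] : List Bool)} : Finset (List Bool)) := by
    simp only [Finset.disjoint_singleton_right, Finset.mem_filter]
    rintro ⟨-, h⟩
    simp at h
  have hd2 : Disjoint (S.filter (fun t => t.head? = some true))
      ((S.filter (fun t => t.head? = some false)) ∪ {([] : List Bool)}) := by
    rw [Finset.disjoint_union_right]
    constructor
    · rw [Finset.disjoint_left]
      intro t h1 h2
      simp only [Finset.mem_filter] at h1 h2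
      rw [h1.2] at h2
      simp at h2
    · simp only [Finset.disjoint_singleton_right, Finset.mem_filter]
      rintro ⟨-, h⟩
      simp at h
  have hcard : S.card = (S.filter (fun t => t.head? = some true)).card +
      ((S.filter (fun t => t.head? = some false)).card + 1) := by
    conv_lhs => rw [hunion]
    rw [Finset.card_union_of_disjoint hd2, Finset.card_union_of_disjoint hd1,
      Finset.card_singleton]
  omega

lemma PA_cons_true (s : List Bool) : PA (true :: s) = P s + 1 := by
  unfold PA P
  rw [filter_head_same, Finset.card_image_of_injective _ (fun x y h => by
    simpa using h)]

lemma PB_cons_false (s : List Bool) : PB (false :: s) = P s + 1 := by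
  unfold PB P
  rw [filter_head_same, Finset.card_image_of_injective _ (fun x y h => by
    simpa using h)]

lemma PB_cons_true (s : List Bool) : PB (true :: s) = PB s := by
  unfold PB
  rw [filter_head_other true false s (by simp)]

lemma PA_cons_false (s : List Bool) : PA (false :: s) = PA s := by
  unfold PA
  rw [filter_head_other false true s (by simp)]

lemma main_lemma : ∀ n a b : ℕ, a + b ≤ n → 0 < a → 0 < b → Nat.Coprime a b →
    PA (gen a b) = a ∧ PB (gen a b) = b := by
  intro n
  induction n with
  | zero => intro a b h ha hb _; omega
  | succ n ih =>
    intro a b h ha hb hab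
    match a, b with
    | a' + 1, b' + 1 =>
      rw [gen]
      rcases lt_trichotomy a' b' with hlt | heq | hgt
      · rw [if_neg (by omega), if_pos hlt]
        have hcop : Nat.Coprime (a' + 1) (b' - a') := by
          have := (Nat.coprime_sub_self_left (m := a' + 1) (n := b' + 1) (by omega)).2 hab.symm
          have h2 : b' + 1 - (a' + 1) = b' - a' := by omega
          rw [h2] at this
          exact this.symm
        obtain ⟨h1, h2⟩ := ih (a' + 1) (b' - a') (by omega) (by omega) (by omega) hcop
        have hp := P_split (gen (a' + 1) (b' - a'))
        refine ⟨?_, ?_⟩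
        · rw [PA_cons_false, h1]
        · rw [PB_cons_false]
          omega
      · subst heq
        have : a' = 0 := by
          have := (Nat.coprime_self _).1 hab
          omega
        subst this
        simp only [gt_iff_lt, lt_irrefl, if_false]
        constructor <;> decide
      · rw [if_pos hgt]
        have hcop : Nat.Coprime (a' - b') (b' + 1) := by
          have := (Nat.coprime_sub_self_left (m := b' + 1) (n := a' + 1) (by omega)).2 hab
          have h2 : a' + 1 - (b' + 1) = a' - b' := by omega
          rwa [h2] at this
        obtain ⟨h1, h2⟩ := ih (a' - b') (b' + 1) (by omega) (by omega) (by omega) hcop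
        have hp := P_split (gen (a' - b') (b' + 1))
        refine ⟨?_, ?_⟩
        · rw [PA_cons_true]
          omega
        · rw [PB_cons_true, h2]


/-- For all coprime positive integers `a` and `b`, the number of distinct subsequences of
the binary word `gen a b` (including the empty subsequence) equals `a + b - 1`. -/
theorem subseq_count_gen (a b : ℕ) (ha : 0 < a) (hb : 0 < b) (hab : Nat.Coprime a b) :
    P (gen a b) = a + b - 1 := by
  obtain ⟨h1, h2⟩ := main_lemma (a + b) a b le_rfl ha hb hab
  have := P_split (gen a b)
  omega
end

section
/- For every positive integer N, the number of binary words having exactly N distinct subsequences (including the empty subsequence) is φ(N+1), where φ is Euler's totient function. -/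
namespace Aux

lemma mem_sub {s t : List Bool} : t ∈ s.sublists.toFinset ↔ t.Sublist s := by
  simp [List.mem_sublists]

lemma filter_head_self (b : Bool) (s : List Bool) :
    (b :: s).sublists.toFinset.filter (fun t => t.head? = some b)
      = s.sublists.toFinset.image (b :: ·) := by
  ext t
  simp only [Finset.mem_filter, Finset.mem_image, mem_sub]
  constructor
  · rintro ⟨hsub, hh⟩
    cases t with
    | nil => simp at hh
    | cons c t' =>
      simp only [List.head?_cons, Option.some_inj] at hh
      subst hh
      rcases List.sublist_cons_iff.mp hsub with h | ⟨r, hr, h⟩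
      · exact ⟨t', (List.sublist_cons_self _ t').trans h, rfl⟩
      · obtain rfl : t' = r := by injection hr
        exact ⟨t', h, rfl⟩
  · rintro ⟨r, hr, rfl⟩
    exact ⟨List.cons_sublist_cons.mpr hr, rfl⟩

lemma filter_head_other {b c : Bool} (hbc : c ≠ b) (s : List Bool) :
    (b :: s).sublists.toFinset.filter (fun t => t.head? = some c)
      = s.sublists.toFinset.filter (fun t => t.head? = some c) := by
  ext t
  simp only [Finset.mem_filter, mem_sub]
  constructor
  · rintro ⟨hsub, hh⟩
    refine ⟨?_, hh⟩
    rcases List.sublist_cons_iff.mp hsub with h | ⟨r, rfl, h⟩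
    · exact h
    · simp only [List.head?_cons, Option.some_inj] at hh
      exact (hbc hh.symm).elim
  · rintro ⟨hsub, hh⟩
    exact ⟨hsub.trans (List.sublist_cons_self b s), hh⟩

def Pb (b : Bool) (s : List Bool) : ℕ :=
  ((s.sublists.toFinset).filter (fun t => t.head? = some b)).card + 1

lemma PA_eq (s : List Bool) : PA s = Pb true s := rfl
lemma PB_eq (s : List Bool) : PB s = Pb false s := rfl

lemma Pb_cons_self (b : Bool) (s : List Bool) : Pb b (b :: s) = P s + 1 := by
  unfold Pb P
  rw [filter_head_self, Finset.card_image_of_injective _ (fun x y h => by injection h)]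

lemma Pb_cons_other {b c : Bool} (hbc : c ≠ b) (s : List Bool) :
    Pb c (b :: s) = Pb c s := by
  unfold Pb
  rw [filter_head_other hbc]

lemma P_succ (s : List Bool) : P s + 1 = Pb true s + Pb false s := by
  classical
  have h1 := Finset.card_filter_add_card_filter_not
    (s := s.sublists.toFinset) (p := fun t => t.head? = some true)
  have h2 : s.sublists.toFinset.filter (fun t => ¬ (t.head? = some true))
      = insert ([] : List Bool)
          (s.sublists.toFinset.filter (fun t => t.head? = some false)) := by
    ext t
    simp only [Finset.mem_insert, Finset.mem_filter, mem_sub]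
    cases t with
    | nil => simp [List.nil_sublist]
    | cons c t' => cases c <;> simp
  have h3 : ([] : List Bool) ∉
      s.sublists.toFinset.filter (fun t => t.head? = some false) := by simp
  rw [h2, Finset.card_insert_of_notMem h3] at h1
  unfold Pb P
  omega

lemma PA_true (s : List Bool) : PA (true :: s) = PA s + PB s := by
  rw [PA_eq, Pb_cons_self, P_succ, ← PA_eq, ← PB_eq]
lemma PB_true (s : List Bool) : PB (true :: s) = PB s := by
  rw [PB_eq, Pb_cons_other (by decide), PB_eq]
lemma PB_false (s : List Bool) : PB (false :: s) = PA s + PB s := by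
  rw [PB_eq, Pb_cons_self, P_succ, ← PA_eq, ← PB_eq]
lemma PA_false (s : List Bool) : PA (false :: s) = PA s := by
  rw [PA_eq, Pb_cons_other (by decide), PA_eq]

lemma PA_nil : PA [] = 1 := by decide
lemma PB_nil : PB [] = 1 := by decide

lemma PA_pos (s : List Bool) : 0 < PA s := Nat.succ_pos _
lemma PB_pos (s : List Bool) : 0 < PB s := Nat.succ_pos _

lemma P_eq (s : List Bool) : P s + 1 = PA s + PB s := P_succ s

lemma coprime (s : List Bool) : Nat.Coprime (PA s) (PB s) := by
  induction s with
  | nil => rw [PA_nil, PB_nil]; decide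
  | cons b s ih =>
    cases b
    · rw [PA_false, PB_false]
      exact Nat.coprime_self_add_right.mpr ih
    · rw [PA_true, PB_true]
      exact Nat.coprime_add_self_left.mpr ih


lemma inj : ∀ s t : List Bool, PA s = PA t → PB s = PB t → s = t := by
  intro s
  induction s with
  | nil =>
    rintro (_ | ⟨c, t'⟩) h1 h2
    · rfl
    · exfalso
      cases c
      · rw [PB_nil, PB_false] at h2
        have := PA_pos t'; have := PB_pos t'; omega
      · rw [PA_nil, PA_true] at h1
        have := PA_pos t'; have := PB_pos t'; omega
  | cons b s' ih =>
    rintro (_ | ⟨c, t'⟩) h1 h2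
    · exfalso
      cases b
      · rw [PB_nil, PB_false] at h2
        have := PA_pos s'; have := PB_pos s'; omega
      · rw [PA_nil, PA_true] at h1
        have := PA_pos s'; have := PB_pos s'; omega
    · cases b <;> cases c
      · rw [PA_false, PA_false] at h1
        rw [PB_false, PB_false] at h2
        rw [ih t' h1 (by omega)]
      · exfalso
        rw [PA_false, PA_true] at h1
        rw [PB_false, PB_true] at h2
        have := PA_pos s'; have := PB_pos s'
        have := PA_pos t'; have := PB_pos t'; omega
      · exfalso
        rw [PA_true, PA_false] at h1
        rw [PB_true, PB_false] at h2
        have := PA_pos s'; have := PB_pos s'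
        have := PA_pos t'; have := PB_pos t'; omega
      · rw [PA_true, PA_true] at h1
        rw [PB_true, PB_true] at h2
        rw [ih t' (by omega) h2]


lemma gen_spec : ∀ n p q : ℕ, p + q ≤ n → 0 < p → 0 < q → Nat.Coprime p q →
    PA (gen p q) = p ∧ PB (gen p q) = q := by
  intro n
  induction n with
  | zero => intro p q h hp _ _; exact absurd h (by omega)
  | succ n ih =>
    rintro (_ | a) (_ | b) hn hp hq hco
    · exact absurd hp (lt_irrefl 0)
    · exact absurd hp (lt_irrefl 0)
    · exact absurd hq (lt_irrefl 0)
    · rw [gen]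
      rcases lt_trichotomy a b with h | h | h
      · rw [if_neg (by omega), if_pos h]
        have hco' : Nat.Coprime (a + 1) (b - a) := by
          have he : (a + 1) + (b - a) = b + 1 := by omega
          rwa [← he, Nat.coprime_self_add_right] at hco
        obtain ⟨h1, h2⟩ := ih (a + 1) (b - a) (by omega) (by omega) (by omega) hco'
        constructor
        · rw [PA_false, h1]
        · rw [PB_false, h1, h2]; omega
      · subst h
        have ha : a = 0 := by
          have := hco
          unfold Nat.Coprime at this
          rw [Nat.gcd_self] at this
          omega
        subst ha
        rw [if_neg (by omega), if_neg (by omega)]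
        exact ⟨PA_nil, PB_nil⟩
      · rw [if_pos h]
        have hco' : Nat.Coprime (a - b) (b + 1) := by
          have he : (a - b) + (b + 1) = a + 1 := by omega
          rwa [← he, Nat.coprime_add_self_left] at hco
        obtain ⟨h1, h2⟩ := ih (a - b) (b + 1) (by omega) (by omega) (by omega) hco'
        constructor
        · rw [PA_true, h1, h2]; omega
        · rw [PB_true, h2]

end Aux


/-- For every positive integer `N`, the number of binary words having exactly `N` distinct
subsequences (including the empty subsequence) is `φ(N+1)`. -/
theorem count_words_with_N_subseqs (N : ℕ) (hN : 0 < N) :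
    {s : List Bool | P s = N}.ncard = Nat.totient (N + 1) := by
  classical
  set F := (Finset.range (N + 1)).filter (fun p => Nat.Coprime p (N + 1)) with hF
  have hmemF : ∀ p ∈ F, 0 < p ∧ 0 < N + 1 - p ∧ Nat.Coprime p (N + 1 - p) := by
    intro p hp
    rw [hF, Finset.mem_filter, Finset.mem_range] at hp
    obtain ⟨hlt, hcop⟩ := hp
    have hp0 : 0 < p := by
      rcases Nat.eq_zero_or_pos p with rfl | h
      · exfalso
        have := Nat.coprime_zero_left (N + 1) |>.mp hcop
        omega
      · exact h
    refine ⟨hp0, by omega, ?_⟩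
    have he : p + (N + 1 - p) = N + 1 := by omega
    rwa [← he, Nat.coprime_self_add_right] at hcop
  have hset : {s : List Bool | P s = N} = ↑(F.image (fun p => gen p (N + 1 - p))) := by
    ext s
    simp only [Set.mem_setOf_eq, Finset.coe_image, Set.mem_image, Finset.mem_coe]
    constructor
    · intro hP
      have hsum : PA s + PB s = N + 1 := by have := Aux.P_eq s; omega
      have hApos := Aux.PA_pos s
      have hBpos := Aux.PB_pos s
      have hmem : PA s ∈ F := by
        rw [hF, Finset.mem_filter, Finset.mem_range]
        refine ⟨by omega, ?_⟩
        have hc := Aux.coprime s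
        rw [← hsum]
        exact Nat.coprime_self_add_right.mpr hc
      refine ⟨PA s, hmem, ?_⟩
      have hq : N + 1 - PA s = PB s := by omega
      rw [hq]
      obtain ⟨h1, h2⟩ := Aux.gen_spec (PA s + PB s) (PA s) (PB s) le_rfl hApos hBpos
        (Aux.coprime s)
      exact Aux.inj _ s h1 h2
    · rintro ⟨p, hp, rfl⟩
      obtain ⟨hp0, hq0, hcop'⟩ := hmemF p hp
      obtain ⟨h1, h2⟩ := Aux.gen_spec (N + 1) p (N + 1 - p) (by omega) hp0 hq0 hcop'
      have := Aux.P_eq (gen p (N + 1 - p))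
      omega
  rw [hset, Set.ncard_coe_finset]
  rw [Finset.card_image_of_injOn]
  · rw [Nat.totient]
    congr 1
    ext p
    simp only [hF, Finset.mem_filter, Finset.mem_range]
    rw [Nat.coprime_comm]
  · intro p hp q hq hpq
    obtain ⟨hp0, hp1, hp2⟩ := hmemF p hp
    obtain ⟨hq0, hq1, hq2⟩ := hmemF q hq
    obtain ⟨h1, _⟩ := Aux.gen_spec (N + 1) p (N + 1 - p) (by omega) hp0 hp1 hp2
    obtain ⟨h1', _⟩ := Aux.gen_spec (N + 1) q (N + 1 - q) (by omega) hq0 hq1 hq2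
    rw [← h1, ← h1']
    exact congrArg PA hpq
end

section
/- Let s be a binary word that is empty or ends with the letter B, and let n be a non-negative integer. Then for every binary word t of length n, P(s ∘ t) ≤ P(s ∘ z_n), where z_n is the alternating word ABAB… of length n. -/
section Sublists

variable {α : Type*} [DecidableEq α]

theorem List.toFinset_sublists_concat (s : List α) (x : α) :
    (s ++ [x]).sublists.toFinset =
      s.sublists.toFinset ∪ s.sublists.toFinset.image (· ++ [x]) := by
  ext u
  simp

theorem List.filter_getLast?_toFinset_sublists_concat_self (s : List α) (x : α) :
    (s ++ [x]).sublists.toFinset.filter (fun t => t.getLast? = some x) =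
      s.sublists.toFinset.image (· ++ [x]) := by
  ext u
  simp only [List.toFinset_sublists_concat, Finset.mem_filter, Finset.mem_union,
    Finset.mem_image, List.mem_toFinset, List.mem_sublists]
  constructor
  · rintro ⟨hu | hu, hlast⟩
    · obtain ⟨v, rfl⟩ := List.getLast?_eq_some_iff.mp hlast
      exact ⟨v, (List.sublist_append_left v [x]).trans hu, rfl⟩
    · exact hu
  · rintro ⟨v, hv, rfl⟩
    exact ⟨Or.inr ⟨v, hv, rfl⟩, List.getLast?_concat⟩

theorem List.filter_getLast?_toFinset_sublists_concat_of_ne (s : List α) {x y : α} (h : x ≠ y) :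
    (s ++ [x]).sublists.toFinset.filter (fun t => t.getLast? = some y) =
      s.sublists.toFinset.filter (fun t => t.getLast? = some y) := by
  rw [List.toFinset_sublists_concat, Finset.filter_union, Finset.union_eq_left]
  intro u hu
  obtain ⟨⟨v, -, rfl⟩, hlast⟩ : (∃ v, v.Sublist s ∧ v ++ [x] = u) ∧ u.getLast? = some y := by
    simpa using hu
  simp [h] at hlast

end Sublists

theorem QA_add_QB (s : List Bool) : QA s + QB s = P s + 1 := by
  have hnotA : s.sublists.toFinset.filter (fun t => ¬ t.getLast? = some true) =
      insert [] (s.sublists.toFinset.filter (fun t => t.getLast? = some false)) := by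
    ext u
    rcases hu : u.getLast? with _ | _ | _ <;>
      simp_all [List.getLast?_eq_none_iff]
    rintro rfl
    simp at hu
  have hsplit := Finset.card_filter_add_card_filter_not (s := s.sublists.toFinset)
    (fun t : List Bool => t.getLast? = some true)
  rw [hnotA, Finset.card_insert_of_notMem (by simp)] at hsplit
  simp only [QA, QB, P]
  omega

theorem QA_concat_true (s : List Bool) : QA (s ++ [true]) = QA s + QB s := by
  rw [QA_add_QB, QA, List.filter_getLast?_toFinset_sublists_concat_self,
    Finset.card_image_of_injective _ (List.append_left_injective _), P]

theorem QB_concat_true (s : List Bool) : QB (s ++ [true]) = QB s := by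
  rw [QB, QB, List.filter_getLast?_toFinset_sublists_concat_of_ne s (by decide)]

theorem QA_concat_false (s : List Bool) : QA (s ++ [false]) = QA s := by
  rw [QA, QA, List.filter_getLast?_toFinset_sublists_concat_of_ne s (by decide)]

theorem QB_concat_false (s : List Bool) : QB (s ++ [false]) = QA s + QB s := by
  rw [QA_add_QB, QB, List.filter_getLast?_toFinset_sublists_concat_self,
    Finset.card_image_of_injective _ (List.append_left_injective _), P]

theorem QA_le_QB (s : List Bool) (hs : s = [] ∨ s.getLast? = some false) : QA s ≤ QB s := by
  obtain rfl | hs := hs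
  · rfl
  · obtain ⟨s, rfl⟩ := List.getLast?_eq_some_iff.mp hs
    rw [QA_concat_false, QB_concat_false]
    omega

def runSum : List Bool → ℕ → ℕ → ℕ
  | [], a, b => a + b
  | true :: t, a, b => runSum t (a + b) b
  | false :: t, a, b => runSum t a (a + b)

theorem P_append_add_one (s t : List Bool) : P (s ++ t) + 1 = runSum t (QA s) (QB s) := by
  induction t generalizing s with
  | nil => rw [List.append_nil, runSum, QA_add_QB]
  | cons x t ih =>
    rw [← List.singleton_append, ← List.append_assoc, ih]
    cases x
    · rw [QA_concat_false, QB_concat_false]; rfl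
    · rw [QA_concat_true, QB_concat_true]; rfl

theorem runSum_star (t : List Bool) (a b : ℕ) : runSum (star t) a b = runSum t b a := by
  induction t generalizing a b with
  | nil => exact Nat.add_comm a b
  | cons x t ih =>
    cases x
    · show runSum (star t) (a + b) b = runSum t b (b + a)
      rw [ih, Nat.add_comm]
    · show runSum (star t) a (a + b) = runSum t (b + a) a
      rw [ih, Nat.add_comm]

theorem runSum_mono (t : List Bool) {a b a' b' : ℕ} (ha : a ≤ a') (hb : b ≤ b') :
    runSum t a b ≤ runSum t a' b' := by
  induction t generalizing a b a' b' with
  | nil => exact Nat.add_le_add ha hb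
  | cons x t ih => cases x <;> exact ih (by omega) (by omega)

theorem runSum_z_succ (n a b : ℕ) : runSum (z (n + 1)) a b = runSum (z n) b (a + b) :=
  runSum_star (z n) (a + b) b

theorem runSum_le_runSum_z {t : List Bool} {n : ℕ} (ht : t.length = n) {a b : ℕ} (hab : a ≤ b) :
    runSum t a b ≤ runSum (z n) a b := by
  induction n generalizing t a b with
  | zero =>
    obtain rfl := List.length_eq_zero_iff.mp ht
    exact le_rfl
  | succ n ih =>
    obtain ⟨x, t, rfl⟩ := List.exists_cons_of_length_eq_add_one ht
    rw [runSum_z_succ]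
    cases x
    · calc runSum t a (a + b) ≤ runSum t b (a + b) := runSum_mono t hab le_rfl
        _ ≤ runSum (z n) b (a + b) := ih (Nat.succ.inj ht) (Nat.le_add_left b a)
    · calc runSum t (a + b) b = runSum (star t) b (a + b) := (runSum_star t b (a + b)).symm
        _ ≤ runSum (z n) b (a + b) :=
          ih ((List.length_map _).trans (Nat.succ.inj ht)) (Nat.le_add_left b a)

/-- Let `s` be a binary word that is empty or ends with the letter `B`, and let `n ≥ 0`.
Then for every binary word `t` of length `n`, `P(s ∘ t) ≤ P(s ∘ z_n)`. -/
theorem append_alternating_maximizes (s : List Bool)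
    (hs : s = [] ∨ s.getLast? = some false) (n : ℕ) (t : List Bool) (ht : t.length = n) :
    P (s ++ t) ≤ P (s ++ z n) := by
  have h := runSum_le_runSum_z ht (QA_le_QB s hs)
  rw [← P_append_add_one, ← P_append_add_one] at h
  omega
end

section
/- Let s be a nonempty binary word ending with the letter B, and let n be a non-negative integer. Then for every binary word t of length n with t ≠ z_n, we have P(s ∘ t) < P(s ∘ z_n); that is, z_n is the unique word of length n maximizing P(s ∘ t). -/
namespace AAS

def Fv : List Bool → ℕ → ℕ → ℕ × ℕ
  | [], a, b => (a, b)
  | true :: t, a, b => Fv t (a + b) b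
  | false :: t, a, b => Fv t a (a + b)

def sumF (t : List Bool) (a b : ℕ) : ℕ := (Fv t a b).1 + (Fv t a b).2

lemma sumF_cons_true (t : List Bool) (a b : ℕ) : sumF (true :: t) a b = sumF t (a + b) b := rfl
lemma sumF_cons_false (t : List Bool) (a b : ℕ) : sumF (false :: t) a b = sumF t a (a + b) := rfl

lemma star_star (t : List Bool) : star (star t) = t := by
  simp [_root_.star, List.map_map, Function.comp_def]

lemma star_cons (x : Bool) (t : List Bool) : star (x :: t) = (!x) :: star t := rfl

lemma Fv_star (t : List Bool) : ∀ a b, Fv (star t) a b = ((Fv t b a).2, (Fv t b a).1) := by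
  induction t with
  | nil => intro a b; simp [_root_.star, Fv]
  | cons x t ih =>
    intro a b
    cases x
    · rw [show _root_.star (false :: t) = true :: _root_.star t from rfl]
      rw [show Fv (true :: _root_.star t) a b = Fv (_root_.star t) (a + b) b from rfl, ih]
      rw [show Fv (false :: t) b a = Fv t b (b + a) from rfl, Nat.add_comm b a]
    · rw [show _root_.star (true :: t) = false :: _root_.star t from rfl]
      rw [show Fv (false :: _root_.star t) a b = Fv (_root_.star t) a (a + b) from rfl, ih]
      rw [show Fv (true :: t) b a = Fv t (b + a) a from rfl, Nat.add_comm b a]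

lemma sumF_star (t : List Bool) (a b : ℕ) : sumF (star t) a b = sumF t b a := by
  simp [sumF, Fv_star, Nat.add_comm]

lemma sumF_mono (t : List Bool) : ∀ a b a' b', a ≤ a' → b ≤ b' → a + b < a' + b' →
    sumF t a b < sumF t a' b' := by
  induction t with
  | nil => intro a b a' b' _ _ h; simpa [sumF, Fv] using h
  | cons x t ih =>
    intro a b a' b' ha hb h
    cases x
    · rw [sumF_cons_false, sumF_cons_false]
      exact ih a (a + b) a' (a' + b') ha (by omega) (by omega)
    · rw [sumF_cons_true, sumF_cons_true]
      exact ih (a + b) b (a' + b') b' (by omega) hb (by omega)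

lemma z_length : ∀ n, (z n).length = n := by
  intro n
  induction n with
  | zero => rfl
  | succ n ih => simp [z, _root_.star, ih]

lemma main : ∀ n (t : List Bool) a b, t.length = n → 0 < a → a < b → t ≠ z n →
    sumF t a b < sumF (z n) a b := by
  intro n
  induction n with
  | zero =>
    intro t a b hl _ _ hne
    exact absurd (List.length_eq_zero_iff.mp hl) (by simpa [z] using hne)
  | succ n ih =>
    have ihB : ∀ (t : List Bool) a b, t.length = n → 0 < b → b < a → t ≠ star (z n) →
        sumF t a b < sumF (star (z n)) a b := by
      intro t a b hl hb hab hne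
      have h1 : sumF t a b = sumF (star t) b a := by
        conv_lhs => rw [← star_star t, sumF_star]
      have h2 : star t ≠ z n := by
        intro h; exact hne (by rw [← h, star_star])
      have h3 : (star t).length = n := by simpa [_root_.star] using hl
      rw [h1, sumF_star (z n) a b]
      exact ih (star t) b a h3 hb hab h2
    intro t a b hl ha hab hne
    cases t with
    | nil => simp at hl
    | cons x t' =>
      have hl' : t'.length = n := by simpa using hl
      have hz : z (n + 1) = true :: star (z n) := rfl
      cases x
      · -- wrong first move: false
        have key1 : sumF t' a (a + b) ≤ sumF (z n) a (a + b) := by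
          by_cases h : t' = z n
          · rw [h]
          · exact le_of_lt (ih t' a (a + b) hl' ha (by omega) h)
        have key2 : sumF (z n) a (a + b) < sumF (z n) b (a + b) :=
          sumF_mono (z n) a (a + b) b (a + b) (le_of_lt hab) le_rfl (by omega)
        have key3 : sumF (star (z n)) (a + b) b = sumF (z n) b (a + b) :=
          sumF_star (z n) (a + b) b
        rw [sumF_cons_false, hz, sumF_cons_true, key3]
        omega
      · -- first move true
        have hne' : t' ≠ star (z n) := by
          intro h; exact hne (by rw [hz, h])
        have := ihB t' (a + b) b hl' (by omega) (by omega) hne'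
        rw [sumF_cons_true, hz, sumF_cons_true]
        exact this

-- list-level lemmas

lemma QAQB (w : List Bool) : QA w + QB w = P w + 1 := by
  have h1 := Finset.card_filter_add_card_filter_not
    (s := w.sublists.toFinset) (p := fun t : List Bool => t.getLast? = some true)
  have h2 := Finset.card_filter_add_card_filter_not
    (s := (w.sublists.toFinset).filter (fun t : List Bool => ¬ t.getLast? = some true))
    (p := fun t : List Bool => t.getLast? = some false)
  have e1 : ((w.sublists.toFinset).filter (fun t : List Bool => ¬ t.getLast? = some true)).filter
      (fun t : List Bool => t.getLast? = some false)
      = (w.sublists.toFinset).filter (fun t : List Bool => t.getLast? = some false) := by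
    rw [Finset.filter_filter]
    apply Finset.filter_congr
    intro x _
    constructor
    · rintro ⟨_, h⟩; exact h
    · intro h; exact ⟨by simp [h], h⟩
  have e2 : ((w.sublists.toFinset).filter (fun t : List Bool => ¬ t.getLast? = some true)).filter
      (fun t : List Bool => ¬ t.getLast? = some false) = {[]} := by
    ext x
    simp only [Finset.mem_filter, List.mem_toFinset, List.mem_sublists, Finset.mem_singleton]
    constructor
    · rintro ⟨⟨_, h1⟩, h2⟩
      cases hx : x.getLast? with
      | none => simpa using (List.getLast?_eq_none_iff.mp hx)
      | some b => cases b <;> simp_all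
    · rintro rfl
      simp
  rw [e1, e2] at h2
  simp only [Finset.card_singleton] at h2
  unfold QA QB P
  omega

lemma QA_concat_true (w : List Bool) : QA (w ++ [true]) = QA w + QB w := by
  have himg : ((w ++ [true]).sublists.toFinset).filter (fun t : List Bool => t.getLast? = some true)
      = (w.sublists.toFinset).image (fun u => u ++ [true]) := by
    ext x
    simp only [Finset.mem_filter, Finset.mem_image, List.mem_toFinset, List.mem_sublists]
    constructor
    · rintro ⟨hsub, hlast⟩
      obtain ⟨v, rfl⟩ := List.getLast?_eq_some_iff.mp hlast
      refine ⟨v, ?_, rfl⟩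
      obtain ⟨l1, l2, heq, hl1, hl2⟩ := List.sublist_append_iff.mp hsub
      rcases List.sublist_singleton.mp hl2 with rfl | rfl
      · rw [List.append_nil] at heq
        exact ((List.sublist_append_left v [true]).trans (heq ▸ hl1))
      · have : v = l1 := by
          have := heq
          exact List.append_left_injective [true] this
        exact this ▸ hl1
    · rintro ⟨u, hu, rfl⟩
      exact ⟨(hu.append (List.Sublist.refl [true])), List.getLast?_concat⟩
  unfold QA QB
  rw [himg, Finset.card_image_of_injective _ (List.append_left_injective [true])]
  have := QAQB w
  unfold QA QB P at this
  omega

lemma QB_concat_true (w : List Bool) : QB (w ++ [true]) = QB w := by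
  have hset : ((w ++ [true]).sublists.toFinset).filter (fun t : List Bool => t.getLast? = some false)
      = (w.sublists.toFinset).filter (fun t : List Bool => t.getLast? = some false) := by
    ext x
    simp only [Finset.mem_filter, List.mem_toFinset, List.mem_sublists]
    constructor
    · rintro ⟨hsub, hlast⟩
      refine ⟨?_, hlast⟩
      obtain ⟨l1, l2, heq, hl1, hl2⟩ := List.sublist_append_iff.mp hsub
      rcases List.sublist_singleton.mp hl2 with rfl | rfl
      · rw [List.append_nil] at heq; exact heq ▸ hl1
      · rw [heq, List.getLast?_concat] at hlast; simp at hlast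
    · rintro ⟨hsub, hlast⟩
      exact ⟨hsub.trans (List.sublist_append_left w [true]), hlast⟩
  unfold QB
  rw [hset]

lemma QB_concat_false (w : List Bool) : QB (w ++ [false]) = QA w + QB w := by
  have himg : ((w ++ [false]).sublists.toFinset).filter (fun t : List Bool => t.getLast? = some false)
      = (w.sublists.toFinset).image (fun u => u ++ [false]) := by
    ext x
    simp only [Finset.mem_filter, Finset.mem_image, List.mem_toFinset, List.mem_sublists]
    constructor
    · rintro ⟨hsub, hlast⟩
      obtain ⟨v, rfl⟩ := List.getLast?_eq_some_iff.mp hlast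
      refine ⟨v, ?_, rfl⟩
      obtain ⟨l1, l2, heq, hl1, hl2⟩ := List.sublist_append_iff.mp hsub
      rcases List.sublist_singleton.mp hl2 with rfl | rfl
      · rw [List.append_nil] at heq
        exact ((List.sublist_append_left v [false]).trans (heq ▸ hl1))
      · have : v = l1 := List.append_left_injective [false] heq
        exact this ▸ hl1
    · rintro ⟨u, hu, rfl⟩
      exact ⟨(hu.append (List.Sublist.refl [false])), List.getLast?_concat⟩
  unfold QA QB
  rw [himg, Finset.card_image_of_injective _ (List.append_left_injective [false])]
  have := QAQB w
  unfold QA QB P at this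
  omega

lemma QA_concat_false (w : List Bool) : QA (w ++ [false]) = QA w := by
  have hset : ((w ++ [false]).sublists.toFinset).filter (fun t : List Bool => t.getLast? = some true)
      = (w.sublists.toFinset).filter (fun t : List Bool => t.getLast? = some true) := by
    ext x
    simp only [Finset.mem_filter, List.mem_toFinset, List.mem_sublists]
    constructor
    · rintro ⟨hsub, hlast⟩
      refine ⟨?_, hlast⟩
      obtain ⟨l1, l2, heq, hl1, hl2⟩ := List.sublist_append_iff.mp hsub
      rcases List.sublist_singleton.mp hl2 with rfl | rfl
      · rw [List.append_nil] at heq; exact heq ▸ hl1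
      · rw [heq, List.getLast?_concat] at hlast; simp at hlast
    · rintro ⟨hsub, hlast⟩
      exact ⟨hsub.trans (List.sublist_append_left w [false]), hlast⟩
  unfold QA
  rw [hset]

lemma QQ_append : ∀ (t s : List Bool), (QA (s ++ t), QB (s ++ t)) = Fv t (QA s) (QB s) := by
  intro t
  induction t with
  | nil => intro s; simp [Fv]
  | cons x t ih =>
    intro s
    have hre : s ++ (x :: t) = (s ++ [x]) ++ t := by simp
    cases x
    · rw [hre, ih (s ++ [false]),
        show Fv (false :: t) (QA s) (QB s) = Fv t (QA s) (QA s + QB s) from rfl,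
        QA_concat_false, QB_concat_false]
    · rw [hre, ih (s ++ [true]),
        show Fv (true :: t) (QA s) (QB s) = Fv t (QA s + QB s) (QB s) from rfl,
        QA_concat_true, QB_concat_true]

lemma P_sumF (s t : List Bool) : P (s ++ t) + 1 = sumF t (QA s) (QB s) := by
  have h := QQ_append t s
  have h1 : QA (s ++ t) = (Fv t (QA s) (QB s)).1 := by rw [← h]
  have h2 : QB (s ++ t) = (Fv t (QA s) (QB s)).2 := by rw [← h]
  have := QAQB (s ++ t)
  unfold sumF
  omega

end AAS

/-- Let `s` be a nonempty binary word ending with `B` and let `n ≥ 0`. Then for every binary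
word `t` of length `n` with `t ≠ z_n`, `P(s ∘ t) < P(s ∘ z_n)`: the word `z_n` is the
unique maximizer. -/
theorem append_alternating_strict (s : List Bool) (hne : s ≠ [])
    (hs : s.getLast? = some false) (n : ℕ) (t : List Bool) (ht : t.length = n)
    (htz : t ≠ z n) :
    P (s ++ t) < P (s ++ z n) := by
  obtain ⟨s', rfl⟩ := List.getLast?_eq_some_iff.mp hs
  have ha : 0 < QA (s' ++ [false]) := by unfold QA; omega
  have hab : QA (s' ++ [false]) < QB (s' ++ [false]) := by
    rw [AAS.QA_concat_false, AAS.QB_concat_false]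
    unfold QB
    omega
  have key := AAS.main n t (QA (s' ++ [false])) (QB (s' ++ [false])) ht ha hab htz
  have e1 := AAS.P_sumF (s' ++ [false]) t
  have e2 := AAS.P_sumF (s' ++ [false]) (z n)
  omega
end

section
/- For every non-negative integer n, P(z_n) = F_{n+3} − 1, where F_m denotes the m-th Fibonacci number (F_1 = F_2 = 1). -/
def H (a : Bool) (s : List Bool) : ℕ :=
  ((s.sublists.toFinset).filter (fun t => t.head? = some a)).card

lemma mem_S {t l : List Bool} : t ∈ l.sublists.toFinset ↔ List.Sublist t l := by
  simp [List.mem_sublists]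

lemma starstar (t : List Bool) : _root_.star (_root_.star t) = t := by
  simp [_root_.star, List.map_map, Function.comp_def]

lemma starinj : Function.Injective _root_.star :=
  Function.LeftInverse.injective starstar

lemma S_star (l : List Bool) :
    (_root_.star l).sublists.toFinset = (l.sublists.toFinset).image _root_.star := by
  ext t
  simp only [mem_S, Finset.mem_image]
  constructor
  · intro h
    refine ⟨_root_.star t, ?_, starstar t⟩
    have := h.map (fun x => !x)
    rwa [show List.map (fun x => !x) (_root_.star l) = l from starstar l] at this
  · rintro ⟨u, hu, rfl⟩
    exact hu.map _

lemma P_star (l : List Bool) : P (_root_.star l) = P l := by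
  rw [P, S_star, Finset.card_image_of_injective _ starinj, P]

lemma head_star (t : List Bool) (a : Bool) :
    (_root_.star t).head? = some a ↔ t.head? = some (!a) := by
  cases t with
  | nil => simp [_root_.star]
  | cons x s => cases x <;> cases a <;> simp [_root_.star]

lemma H_star (a : Bool) (l : List Bool) : H a (_root_.star l) = H (!a) l := by
  rw [H, S_star, Finset.filter_image,
    Finset.card_image_of_injective _ starinj, H]
  congr 1
  apply Finset.filter_congr
  intro t _
  simp [head_star]

lemma S_cons (a : Bool) (l : List Bool) :
    (a :: l).sublists.toFinset
      = l.sublists.toFinset ∪ (l.sublists.toFinset).image (a :: ·) := by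
  ext t
  simp only [mem_S, Finset.mem_union, Finset.mem_image, List.sublist_cons_iff]
  constructor
  · rintro (h | ⟨r, rfl, h⟩)
    · exact Or.inl h
    · exact Or.inr ⟨r, h, rfl⟩
  · rintro (h | ⟨r, hr, rfl⟩)
    · exact Or.inl h
    · exact Or.inr ⟨r, rfl, hr⟩

lemma inter_eq (a : Bool) (l : List Bool) :
    l.sublists.toFinset ∩ (l.sublists.toFinset).image (a :: ·)
      = (l.sublists.toFinset).filter (fun t => t.head? = some a) := by
  ext t
  simp only [Finset.mem_inter, Finset.mem_image, Finset.mem_filter, mem_S]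
  constructor
  · rintro ⟨h, u, hu, rfl⟩
    exact ⟨h, rfl⟩
  · rintro ⟨h, hh⟩
    refine ⟨h, t.tail, ?_, ?_⟩
    · exact (List.tail_sublist t).trans h
    · cases t with
      | nil => simp at hh
      | cons x s => simp at hh; simp [hh]

lemma P_cons (a : Bool) (l : List Bool) : P (a :: l) + H a l = 2 * P l := by
  rw [P, S_cons, H]
  have := Finset.card_union_add_card_inter l.sublists.toFinset
    ((l.sublists.toFinset).image (a :: ·))
  rw [inter_eq] at this
  rw [this, Finset.card_image_of_injective _ (fun x y h => by injection h)]
  ring_nf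
  rfl

lemma H_cons_same (a : Bool) (l : List Bool) : H a (a :: l) = P l := by
  rw [H, P]
  rw [show ((a :: l).sublists.toFinset).filter (fun t => t.head? = some a)
      = (l.sublists.toFinset).image (a :: ·) from ?_]
  · exact Finset.card_image_of_injective _ (fun x y h => by injection h)
  ext t
  simp only [Finset.mem_filter, Finset.mem_image, mem_S, List.sublist_cons_iff]
  constructor
  · rintro ⟨h | ⟨r, rfl, hr⟩, hh⟩
    · cases t with
      | nil => simp at hh
      | cons x s =>
        simp at hh
        exact ⟨s, (List.tail_sublist (x :: s)).trans h, by rw [hh]⟩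
    · exact ⟨r, hr, rfl⟩
  · rintro ⟨r, hr, rfl⟩
    exact ⟨Or.inr ⟨r, rfl, hr⟩, rfl⟩

lemma H_cons_ne (a b : Bool) (l : List Bool) (hab : a ≠ b) :
    H b (a :: l) = H b l := by
  rw [H, H]
  congr 1
  ext t
  simp only [Finset.mem_filter, mem_S, List.sublist_cons_iff]
  constructor
  · rintro ⟨h | ⟨r, rfl, hr⟩, hh⟩
    · exact ⟨h, hh⟩
    · simp at hh; exact (hab hh).elim
  · rintro ⟨h, hh⟩
    exact ⟨Or.inl h, hh⟩

lemma key (n : ℕ) : P (z n) = Nat.fib (n + 3) - 1 ∧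
    H true (z n) = Nat.fib (n + 2) - 1 ∧ H false (z n) = Nat.fib (n + 1) - 1 := by
  induction n with
  | zero => refine ⟨?_, ?_, ?_⟩ <;> decide
  | succ n ih =>
    obtain ⟨hp, ha, hb⟩ := ih
    have hz : z (n + 1) = true :: _root_.star (z n) := rfl
    have h1 := P_cons true (_root_.star (z n))
    rw [← hz, H_star, P_star] at h1
    have h2 : H true (z (n + 1)) = P (z n) := by
      rw [hz, H_cons_same, P_star]
    have h3 : H false (z (n + 1)) = H true (z n) := by
      rw [hz, H_cons_ne true false _ (by simp), H_star]; rfl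
    have e0 : Nat.fib (n + 3) = Nat.fib (n + 1) + Nat.fib (n + 2) := by
      rw [show n + 3 = n + 1 + 2 from rfl, Nat.fib_add_two]
    have e1 : Nat.fib (n + 1 + 3) = Nat.fib (n + 2) + Nat.fib (n + 3) := by
      rw [show n + 1 + 3 = n + 2 + 2 from rfl, Nat.fib_add_two]
    have e2 : Nat.fib (n + 1 + 2) = Nat.fib (n + 3) := rfl
    have e3 : Nat.fib (n + 1 + 1) = Nat.fib (n + 2) := rfl
    have p1 : 0 < Nat.fib (n + 1) := Nat.fib_pos.mpr (by omega)
    have p2 : 0 < Nat.fib (n + 2) := Nat.fib_pos.mpr (by omega)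
    have p3 : 0 < Nat.fib (n + 3) := Nat.fib_pos.mpr (by omega)
    have hn : (!true) = false := rfl
    rw [hn] at h1
    refine ⟨?_, ?_, ?_⟩
    · omega
    · omega
    · omega

/-- For every non-negative integer `n`, `P(z_n) = F_{n+3} - 1`. -/
theorem P_z_eq_fib (n : ℕ) : P (z n) = Nat.fib (n + 3) - 1 :=
  (key n).1
end

section
/- For every non-negative integer n, P^A(z_n) = F_{n+2} and P^B(z_n) = F_{n+1}, where F_m denotes the m-th Fibonacci number with the convention F_0 = 0, F_1 = F_2 = 1. -/

def fH (b : Bool) (s : List Bool) : ℕ :=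
  ((s.sublists.toFinset).filter (fun t => t.head? = some b)).card

lemma filter_cons_same (b : Bool) (s : List Bool) :
    ((b :: s).sublists.toFinset.filter (fun t => t.head? = some b))
      = (s.sublists.toFinset).image (b :: ·) := by
  ext t
  simp only [Finset.mem_filter, Finset.mem_image, List.mem_toFinset, List.mem_sublists]
  constructor
  · rintro ⟨hsub, hhead⟩
    cases t with
    | nil => simp at hhead
    | cons a u =>
      obtain rfl : a = b := by simpa using hhead
      exact ⟨u, (List.cons_sublist_cons).mp hsub, rfl⟩
  · rintro ⟨u, hu, rfl⟩
    exact ⟨(List.cons_sublist_cons).mpr hu, rfl⟩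

lemma fH_cons_same (b : Bool) (s : List Bool) :
    fH b (b :: s) = (s.sublists.toFinset).card := by
  rw [fH, filter_cons_same]
  exact Finset.card_image_of_injective _ (fun x y h => by simpa using h)

lemma fH_cons_diff (b : Bool) (s : List Bool) :
    fH (!b) (b :: s) = fH (!b) s := by
  unfold fH
  congr 1
  ext t
  simp only [Finset.mem_filter, List.mem_toFinset, List.mem_sublists]
  constructor
  · rintro ⟨hsub, hhead⟩
    refine ⟨?_, hhead⟩
    rcases List.sublist_cons_iff.mp hsub with h | ⟨r, rfl, hr⟩
    · exact h
    · simp at hhead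
  · rintro ⟨hsub, hhead⟩
    exact ⟨hsub.cons _, hhead⟩

lemma card_total (s : List Bool) :
    (s.sublists.toFinset).card = fH true s + fH false s + 1 := by
  classical
  have hsplit := Finset.card_filter_add_card_filter_not
    (s := s.sublists.toFinset) (p := fun t => t.head? = some true)
  have hneg : (s.sublists.toFinset).filter (fun t => ¬ t.head? = some true)
      = insert ([] : List Bool) ((s.sublists.toFinset).filter (fun t => t.head? = some false)) := by
    ext t
    simp only [Finset.mem_filter, Finset.mem_insert, List.mem_toFinset, List.mem_sublists]
    constructor
    · rintro ⟨hsub, hhead⟩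
      cases t with
      | nil => exact Or.inl rfl
      | cons a u =>
        cases a with
        | false => exact Or.inr ⟨hsub, rfl⟩
        | true => simp at hhead
    · rintro (rfl | ⟨hsub, hhead⟩)
      · exact ⟨List.nil_sublist s, by simp⟩
      · refine ⟨hsub, ?_⟩
        cases t with
        | nil => simp at hhead
        | cons a u => simp_all
  rw [hneg, Finset.card_insert_of_notMem (by simp)] at hsplit
  unfold fH
  omega

lemma map_not_invol (l : List Bool) :
    (l.map (fun x => !x)).map (fun x => !x) = l := by
  induction l with
  | nil => simp
  | cons a l ih => simp [ih]

lemma map_not_inj : Function.Injective (List.map (fun x : Bool => !x)) := by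
  intro x y h
  rw [← map_not_invol x, h, map_not_invol]

lemma fH_star (b : Bool) (s : List Bool) : fH b (star s) = fH (!b) s := by
  show fH b (s.map (fun x => !x)) = _
  have himg : ((s.map (fun x => !x)).sublists.toFinset.filter (fun t => t.head? = some b))
      = ((s.sublists.toFinset.filter (fun t => t.head? = some (!b))).image
          (List.map (fun x => !x))) := by
    ext t
    simp only [Finset.mem_filter, Finset.mem_image, List.mem_toFinset, List.mem_sublists]
    constructor
    · rintro ⟨hsub, hhead⟩
      refine ⟨t.map (fun x => !x), ⟨?_, ?_⟩, map_not_invol t⟩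
      · have h := hsub.map (fun x => !x)
        rwa [map_not_invol] at h
      · cases t with
        | nil => simp at hhead
        | cons a u =>
          obtain rfl : a = b := by simpa using hhead
          simp
    · rintro ⟨u, ⟨hsub, hhead⟩, rfl⟩
      refine ⟨hsub.map _, ?_⟩
      cases u with
      | nil => simp at hhead
      | cons a v =>
        obtain rfl : a = !b := by simpa using hhead
        simp
  rw [fH, himg, Finset.card_image_of_injective _ map_not_inj, fH]

/-- For every non-negative integer `n`, `P^A(z_n) = F_{n+2}` and `P^B(z_n) = F_{n+1}`. -/
theorem PA_PB_z (n : ℕ) : PA (z n) = Nat.fib (n + 2) ∧ PB (z n) = Nat.fib (n + 1) := by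
  induction n with
  | zero => constructor <;> decide
  | succ n ih =>
    obtain ⟨hA, hB⟩ := ih
    have e1 : PA (z n) = fH true (z n) + 1 := rfl
    have e2 : PB (z n) = fH false (z n) + 1 := rfl
    have e3 : PA (z (n + 1)) = fH true (z n) + fH false (z n) + 2 := by
      show fH true (true :: star (z n)) + 1 = _
      rw [fH_cons_same, card_total]
      have h1 := fH_star true (z n)
      have h2 := fH_star false (z n)
      simp only [Bool.not_true, Bool.not_false] at h1 h2
      omega
    have e4 : PB (z (n + 1)) = fH true (z n) + 1 := by
      show fH false (true :: star (z n)) + 1 = _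
      have h := fH_cons_diff true (star (z n))
      simp only [Bool.not_true] at h
      rw [h]
      have h2 := fH_star false (z n)
      simp only [Bool.not_false] at h2
      omega
    have hfib : Nat.fib (n + 1 + 2) = Nat.fib (n + 1) + Nat.fib (n + 2) := by
      rw [Nat.fib_add_two]
    constructor
    · rw [e3]; omega
    · rw [e4]
      have h5 : Nat.fib (n + 1 + 1) = Nat.fib (n + 2) := rfl
      omega
end

section
/- Let a and b be coprime positive integers and suppose the rational number a/b has continued fraction expansion a/b = [c_0; c_1, c_2, …, c_{k−1}, c_k + 1] (i.e., the expansion of a/b whose last partial quotient has been written as c_k + 1). Then gen(a,b) = A^{c_0} ∘ B^{c_1} ∘ A^{c_2} ∘ ⋯, the concatenation of blocks of c_0 letters A, c_1 letters B, c_2 letters A, and so on in alternation. -/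
/-- The value of the finite simple continued fraction `[c₀; c₁, …, cₘ]`. -/
def cfVal : List ℕ → ℚ
  | [] => 0
  | [c] => (c : ℚ)
  | c :: rest => (c : ℚ) + 1 / cfVal rest

/-- Increment the last entry of a list. -/
def lastInc : List ℕ → List ℕ
  | [] => []
  | [c] => [c + 1]
  | c :: rest => c :: lastInc rest

/-- `blocks ltr [c₀, c₁, …]` is the word `ltr^{c₀} ∘ (!ltr)^{c₁} ∘ ltr^{c₂} ∘ ⋯`. -/
def blocks : Bool → List ℕ → List Bool
  | _, [] => []
  | ltr, c :: rest => List.replicate c ltr ++ blocks (!ltr) rest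

/-!
`gen` runs the subtractive Euclidean algorithm on `(a, b)`, and swapping `a` and `b` swaps the
letters. Writing `a / b = c + 1 / r` with `r ≥ 1`, the first `c` steps subtract `b` from `a`,
leaving `a' = a - c b` with `b / a' = r`; the rest of the word is `gen a' b`, the letter-swap of
`gen b a'`. Induction on the continued fraction thus produces one block per partial quotient, the
final quotient `cₖ + 1` ending at `gen b b = []`.
-/

lemma gen_of_lt {a b : ℕ} (hb : 0 < b) (h : b < a) : gen a b = true :: gen (a - b) b := by
  obtain ⟨a, rfl⟩ := Nat.exists_eq_add_of_lt (hb.trans h)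
  obtain ⟨b, rfl⟩ := Nat.exists_eq_add_of_lt hb
  rw [gen, if_pos (by omega)]
  congr 2
  omega

lemma gen_self (b : ℕ) : gen b b = [] := by
  cases b <;> simp [gen]

lemma star_nil : star [] = [] := rfl

lemma star_cons (x : Bool) (s : List Bool) : star (x :: s) = (!x) :: star s := rfl

lemma star_append (s t : List Bool) : star (s ++ t) = star s ++ star t :=
  List.map_append

lemma star_replicate (n : ℕ) (x : Bool) : star (List.replicate n x) = List.replicate n (!x) :=
  List.map_replicate

lemma star_blocks (ltr : Bool) (cs : List ℕ) : star (blocks ltr cs) = blocks (!ltr) cs := by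
  induction cs generalizing ltr with
  | nil => rfl
  | cons c cs ih => rw [blocks, blocks, star_append, star_replicate, ih]

lemma gen_swap (a b : ℕ) : gen b a = star (gen a b) := by
  fun_induction gen a b with
  | case1 b => cases b <;> simp [gen, star_nil]
  | case2 a => simp [gen, star_nil]
  | case3 a b h ih => simp [gen, h, h.not_gt, star_cons, ih]
  | case4 a b h h' ih => simp [gen, h', star_cons, ih]
  | case5 a b h h' =>
    obtain rfl : a = b := by omega
    rw [gen_self, star_nil]

lemma gen_add_mul {a b : ℕ} (ha : 0 < a) (hb : 0 < b) (c : ℕ) :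
    gen (a + c * b) b = List.replicate c true ++ gen a b := by
  induction c with
  | zero => simp
  | succ c ih =>
    rw [gen_of_lt hb (by nlinarith), List.replicate_succ, List.cons_append, ← ih]
    congr 2
    rw [Nat.succ_mul, ← add_assoc, Nat.add_sub_cancel]

lemma lastInc_ne_nil {l : List ℕ} (hl : l ≠ []) : lastInc l ≠ [] := by
  match l, hl with
  | [_], _ | _ :: _ :: _, _ => simp [lastInc]

lemma lastInc_cons {l : List ℕ} (hl : l ≠ []) (c : ℕ) : lastInc (c :: l) = c :: lastInc l := by
  match l, hl with
  | _ :: _, _ => rfl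

lemma cfVal_cons {l : List ℕ} (hl : l ≠ []) (c : ℕ) : cfVal (c :: l) = c + 1 / cfVal l := by
  match l, hl with
  | _ :: _, _ => rfl

lemma one_le_cfVal {l : List ℕ} (hl : l ≠ []) (h : ∀ c ∈ l, 1 ≤ c) : 1 ≤ cfVal l := by
  induction l with
  | nil => exact absurd rfl hl
  | cons c l ih =>
    have hc : (1 : ℚ) ≤ c := by exact_mod_cast h c List.mem_cons_self
    rcases eq_or_ne l [] with rfl | hl'
    · exact hc
    · have := ih hl' fun d hd => h d (List.mem_cons_of_mem c hd)
      rw [cfVal_cons hl']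
      have : 0 ≤ 1 / cfVal l := by positivity
      linarith

lemma exists_eq_add_mul_of_div_eq {a b c : ℕ} {r : ℚ} (hb : 0 < b) (hr : 0 < r)
    (h : (a : ℚ) / b = c + 1 / r) : ∃ a', 0 < a' ∧ a = a' + c * b ∧ (b : ℚ) / a' = r := by
  have hb' : (0 : ℚ) < b := by exact_mod_cast hb
  have ha : (a : ℚ) = c * b + b / r := by
    field_simp at h ⊢
    linarith
  have hlt : c * b < a := by
    have : (0 : ℚ) < b / r := by positivity
    exact_mod_cast (show (c * b : ℚ) < a by linarith)
  refine ⟨a - c * b, by omega, by omega, ?_⟩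
  rw [Nat.cast_sub hlt.le, Nat.cast_mul, ha]
  field_simp
  ring

theorem gen_eq_blocks_general (a b : ℕ) (hb : 0 < b)
    (cs : List ℕ) (hne : cs ≠ [])
    (htail : ∀ c ∈ (lastInc cs).tail, 1 ≤ c)
    (hval : cfVal (lastInc cs) = (a : ℚ) / (b : ℚ)) :
    gen a b = blocks true cs := by
  induction cs generalizing a b with
  | nil => exact absurd rfl hne
  | cons c rest ih =>
    rcases eq_or_ne rest [] with rfl | hrest
    · have hval' : (a : ℚ) / b = c + 1 / 1 := by simpa [lastInc, cfVal] using hval.symm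
      obtain ⟨a', ha', rfl, hba'⟩ := exists_eq_add_mul_of_div_eq hb one_pos hval'
      obtain rfl : a' = b := by exact_mod_cast (div_eq_one_iff_eq (by positivity)).mp hba' |>.symm
      rw [gen_add_mul hb hb, gen_self]
      simp [blocks]
    · rw [lastInc_cons hrest, List.tail_cons] at htail
      rw [lastInc_cons hrest, cfVal_cons (lastInc_ne_nil hrest)] at hval
      have hr := one_le_cfVal (lastInc_ne_nil hrest) htail
      obtain ⟨a', ha', rfl, hba'⟩ := exists_eq_add_mul_of_div_eq hb (by linarith) hval.symm
      rw [gen_add_mul ha' hb, gen_swap,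
        ih b a' ha' hrest (fun d hd => htail d (List.mem_of_mem_tail hd)) hba'.symm, star_blocks]
      rfl

/-- If `a/b = [c₀; c₁, …, c_{k-1}, cₖ + 1]` is a continued fraction expansion of `a/b`
(last partial quotient written as `cₖ + 1`), then
`gen(a,b) = A^{c₀} ∘ B^{c₁} ∘ A^{c₂} ∘ ⋯`. -/
theorem gen_eq_blocks (a b : ℕ) (ha : 0 < a) (hb : 0 < b) (hab : Nat.Coprime a b)
    (cs : List ℕ) (hne : cs ≠ [])
    (htail : ∀ c ∈ (lastInc cs).tail, 1 ≤ c)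
    (hval : cfVal (lastInc cs) = (a : ℚ) / (b : ℚ)) :
    gen a b = blocks true cs :=
  gen_eq_blocks_general a b hb cs hne htail hval
end
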